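/- arXiv:2001.08725 — 4 statements merged into one kernel-verified Lean document; each statement's English description precedes it below -/
import Mathlib

section
/- For z = E + iη in the domain D = {|E| ≤ 5, 0 < η ≤ 10}, there exist constants c, C > 0 such that c·√(κ+η) ≤ |1 - m_sc(z)²| ≤ C·√(κ+η), where κ = min(|E-2|, |E+2|) is the distance of E to the spectral edges ±2. -/
/-!
The quadratic gives `(1 - m²)² = (z - 2)(z + 2) m²`, so `|1 - m²| = √(|z - 2| |z + 2|) |m|`.
Since `m (m + z) = -1`, comparing imaginary parts in `m + z = -1/m` shows `|m| < 1` on the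
upper half plane, and then `|m| ≥ 1 / (1 + |z|)` is bounded below on `D`. Finally, the factor
for the edge nearer to `E` is comparable to `κ + η` and the other factor stays in `[2, 17]`.
-/

open Complex

lemma one_sub_sq_sq_eq_of_quadratic {m z : ℂ} (h : m ^ 2 + z * m + 1 = 0) :
    (1 - m ^ 2) ^ 2 = (z - 2) * (z + 2) * m ^ 2 := by
  linear_combination (1 + m ^ 2 - z * m) * h

lemma norm_one_sub_sq_eq_of_quadratic {m z : ℂ} (h : m ^ 2 + z * m + 1 = 0) :
    ‖1 - m ^ 2‖ = √(‖z - 2‖ * ‖z + 2‖) * ‖m‖ := by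
  have hsq : ‖1 - m ^ 2‖ ^ 2 = ‖z - 2‖ * ‖z + 2‖ * ‖m‖ ^ 2 := by
    simpa only [norm_pow, norm_mul] using congrArg (‖·‖) (one_sub_sq_sq_eq_of_quadratic h)
  rw [← Real.sqrt_sq (norm_nonneg (1 - m ^ 2)), hsq, Real.sqrt_mul (by positivity),
    Real.sqrt_sq (norm_nonneg m)]

lemma norm_mul_norm_add_eq_one_of_quadratic {m z : ℂ} (h : m ^ 2 + z * m + 1 = 0) :
    ‖m‖ * ‖m + z‖ = 1 := by
  rw [← norm_mul, show m * (m + z) = -1 by linear_combination h, norm_neg, norm_one]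

lemma norm_lt_one_of_quadratic {m z : ℂ} (h : m ^ 2 + z * m + 1 = 0) (hm : 0 < m.im)
    (hz : 0 < z.im) : ‖m‖ < 1 := by
  have hm0 : m ≠ 0 := fun h0 => hm.ne' (by simp [h0])
  have hinv : m + z = (-m)⁻¹ := eq_inv_of_mul_eq_one_right (by linear_combination -h)
  have him : m.im + z.im = m.im / normSq m := by
    simpa [inv_im, neg_div] using congrArg Complex.im hinv
  have hn : 0 < normSq m := normSq_pos.mpr hm0
  have : normSq m < 1 := by
    rw [eq_div_iff hn.ne'] at him
    nlinarith
  rw [normSq_eq_norm_sq] at this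
  exact (sq_lt_one_iff₀ (norm_nonneg m)).mp this

lemma inv_one_add_norm_le_norm_of_quadratic {m z : ℂ} (h : m ^ 2 + z * m + 1 = 0)
    (hm : ‖m‖ ≤ 1) : (1 + ‖z‖)⁻¹ ≤ ‖m‖ := by
  have h1 := norm_mul_norm_add_eq_one_of_quadratic h
  have h2 : ‖m + z‖ ≤ 1 + ‖z‖ := (norm_add_le m z).trans (by linarith)
  rw [inv_le_iff_one_le_mul₀ (by positivity)]
  calc (1 : ℝ) = ‖m‖ * ‖m + z‖ := h1.symm
    _ ≤ ‖m‖ * (1 + ‖z‖) := by gcongr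
    _ = _ := by ring

lemma abs_re_add_abs_im_le_norm_mul_norm_le {u v : ℂ} {B : ℝ} (hv : 2 ≤ |v.re|)
    (hvB : |v.re| + |v.im| ≤ B) :
    |u.re| + |u.im| ≤ ‖u‖ * ‖v‖ ∧ ‖u‖ * ‖v‖ ≤ B * (|u.re| + |u.im|) := by
  have hv2 : 2 ≤ ‖v‖ := hv.trans (abs_re_le_norm v)
  have hu := norm_le_abs_re_add_abs_im u
  constructor
  · nlinarith [abs_re_le_norm u, abs_im_le_norm u, norm_nonneg u]
  · nlinarith [norm_le_abs_re_add_abs_im v, norm_nonneg u, norm_nonneg v]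

lemma norm_sub_two_mul_norm_add_two_bounds {E η : ℝ} (hE : |E| ≤ 5) (hη : 0 ≤ η) (hη10 : η ≤ 10) :
    min |E - 2| |E + 2| + η ≤ ‖(E + η * I : ℂ) - 2‖ * ‖(E + η * I : ℂ) + 2‖ ∧
      ‖(E + η * I : ℂ) - 2‖ * ‖(E + η * I : ℂ) + 2‖ ≤ 17 * (min |E - 2| |E + 2| + η) := by
  set z : ℂ := E + η * I
  have hsub : |(z - 2).re| = |E - 2| ∧ |(z - 2).im| = η := by simp [z, abs_of_nonneg hη]
  have hadd : |(z + 2).re| = |E + 2| ∧ |(z + 2).im| = η := by simp [z, abs_of_nonneg hη]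
  have hfar : 4 ≤ |E - 2| + |E + 2| := by
    calc (4 : ℝ) = |(E + 2) - (E - 2)| := by norm_num
      _ ≤ _ := (abs_sub _ _).trans_eq (add_comm _ _)
  have hE2 : |E - 2| ≤ 7 ∧ |E + 2| ≤ 7 := by
    constructor <;> (rw [abs_le]; constructor) <;> linarith [abs_le.mp hE]
  rcases le_total |E - 2| |E + 2| with hc | hc
  · rw [min_eq_left hc, ← hsub.1, ← hsub.2]
    exact abs_re_add_abs_im_le_norm_mul_norm_le (by linarith) (by linarith)
  · rw [min_eq_right hc, ← hadd.1, ← hadd.2, mul_comm ‖z - 2‖]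
    exact abs_re_add_abs_im_le_norm_mul_norm_le (by linarith) (by linarith)

theorem one_sub_msc_sq_bounds_general (m : ℂ → ℂ)
    (hmap : ∀ z : ℂ, 0 < z.im → 0 < (m z).im)
    (heq : ∀ z : ℂ, 0 < z.im → (m z) ^ 2 + z * m z + 1 = 0) :
    ∃ c C : ℝ, 0 < c ∧ 0 < C ∧ ∀ E η : ℝ, |E| ≤ 5 → 0 < η → η ≤ 10 →
      c * Real.sqrt (min |E - 2| |E + 2| + η)
          ≤ ‖1 - (m (E + η * Complex.I)) ^ 2‖ ∧
      ‖1 - (m (E + η * Complex.I)) ^ 2‖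
          ≤ C * Real.sqrt (min |E - 2| |E + 2| + η) := by
  refine ⟨1 / 16, 5, by norm_num, by norm_num, fun E η hE hη hη10 => ?_⟩
  set z : ℂ := E + η * I
  set K := min |E - 2| |E + 2| + η
  have hz : 0 < z.im := by simpa [z] using hη
  have hroot := heq z hz
  have hm1 : ‖m z‖ ≤ 1 := (norm_lt_one_of_quadratic hroot (hmap z hz) hz).le
  have hz15 : ‖z‖ ≤ 15 :=
    (norm_le_abs_re_add_abs_im z).trans (by simp [z, abs_of_pos hη]; linarith [abs_le.mp hE])
  have hm16 : 1 / 16 ≤ ‖m z‖ :=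
    calc (1 / 16 : ℝ) ≤ (1 + ‖z‖)⁻¹ := by rw [one_div]; gcongr; linarith
      _ ≤ ‖m z‖ := inv_one_add_norm_le_norm_of_quadratic hroot hm1
  obtain ⟨hlo, hhi⟩ := norm_sub_two_mul_norm_add_two_bounds hE hη.le hη10
  rw [norm_one_sub_sq_eq_of_quadratic hroot]
  constructor
  · calc 1 / 16 * √K ≤ ‖m z‖ * √(‖z - 2‖ * ‖z + 2‖) := by gcongr
      _ = _ := mul_comm _ _
  · calc √(‖z - 2‖ * ‖z + 2‖) * ‖m z‖ ≤ √(17 * K) * 1 := by gcongr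
      _ ≤ 5 * √K := by
        rw [Real.sqrt_mul (by norm_num), mul_one]
        gcongr
        rw [Real.sqrt_le_left (by norm_num)]
        norm_num

/-- For `z = E + iη` in the domain `D`, `|1 - m_sc(z)²| ∼ √(κ+η)` where
`κ = min(|E-2|, |E+2|)`. -/
theorem one_sub_msc_sq_bounds (m : ℂ → ℂ)
    (hanalytic : AnalyticOn ℂ m {z : ℂ | 0 < z.im})
    (hmap : ∀ z : ℂ, 0 < z.im → 0 < (m z).im)
    (heq : ∀ z : ℂ, 0 < z.im → (m z) ^ 2 + z * m z + 1 = 0) :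
    ∃ c C : ℝ, 0 < c ∧ 0 < C ∧ ∀ E η : ℝ, |E| ≤ 5 → 0 < η → η ≤ 10 →
      c * Real.sqrt (min |E - 2| |E + 2| + η)
          ≤ ‖1 - (m (E + η * Complex.I)) ^ 2‖ ∧
      ‖1 - (m (E + η * Complex.I)) ^ 2‖
          ≤ C * Real.sqrt (min |E - 2| |E + 2| + η) :=
  one_sub_msc_sq_bounds_general m hmap heq
end

section
/- For z = E + iη with |E| ≤ 5, 0 < η ≤ 10, the imaginary part of m_sc(z) is comparable to √(κ+η) when |E| ≤ 2, and comparable to η/√(κ+η) when |E| > 2, where κ = min(|E-2|, |E+2|). -/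
open Complex

private lemma le_of_sq_le_sq' {x y : ℝ} (hy : 0 ≤ y) (h : x^2 ≤ y^2) : x ≤ y := by
  nlinarith [h, hy]

private lemma sq_le_sq'' {x y : ℝ} (hx : 0 ≤ x) (h : x ≤ y) : x^2 ≤ y^2 := by
  nlinarith [hx, h]

private lemma sqrt_le_of_sq_le' {x y : ℝ} (hy : 0 ≤ y) (h : x ≤ y^2) : Real.sqrt x ≤ y := by
  calc Real.sqrt x ≤ Real.sqrt (y^2) := Real.sqrt_le_sqrt h
    _ = y := Real.sqrt_sq hy

private lemma le_sqrt_of_sq_le' {x y : ℝ} (hx : 0 ≤ x) (h : x^2 ≤ y) : x ≤ Real.sqrt y := by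
  calc x = Real.sqrt (x^2) := (Real.sqrt_sq hx).symm
    _ ≤ Real.sqrt y := Real.sqrt_le_sqrt h

private lemma lem_key (t b r2 : ℝ) (htb : t^2 + b^2 = r2) (h254 : 1/254 ≤ r2)
    (ht0 : 0 ≤ t) (ht1 : t < 1) (hA : t*(1+r2) ≤ 2*r2) : (1-t)^2 ≤ 1200*b^2 := by
  rcases le_total t (1/600) with h | h
  · nlinarith [mul_le_mul h h ht0 (by norm_num : (0:ℝ) ≤ 1/600),
      mul_nonneg ht0 (show (0:ℝ) ≤ 2 - t by linarith)]
  · nlinarith [mul_nonneg (sq_nonneg (1-t)) (show (0:ℝ) ≤ 1201*t - 2 by linarith),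
      show (0:ℝ) ≤ 2*r2 - t*(1+r2) by linarith,
      show (0:ℝ) < 2 - t by linarith]

private lemma lem_b2 (t b r2 : ℝ) (htb : t^2 + b^2 = r2) (hr2pos : 0 < r2) (P3 : r2 < 1)
    (ht0 : 0 ≤ t) (hA2 : 2*r2 ≤ t*(1+r2)) : b^2 ≤ (1-r2)^2 := by
  have hsq2 : (2*r2)*(2*r2) ≤ (t*(1+r2))*(t*(1+r2)) :=
    mul_le_mul hA2 hA2 (by positivity) (le_trans (by positivity) hA2)
  have hcube : (0:ℝ) ≤ 1 - r2^3 := by nlinarith [mul_pos hr2pos hr2pos, P3, hr2pos]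
  nlinarith [hsq2, mul_nonneg (show (0:ℝ) ≤ 1 - r2 by linarith) hcube, sq_nonneg (1+r2)]

private lemma lem_eta_sq (η : ℝ) (hη : 0 < η) (hη10 : η ≤ 10) : η^2 ≤ 100 := by
  nlinarith [hη, hη10]

set_option maxHeartbeats 1000000 in
private lemma msc_real_bounds (E η a b : ℝ) (hE5 : |E| ≤ 5) (hη : 0 < η) (hη10 : η ≤ 10)
    (hb : 0 < b) (Req : a^2 - b^2 + E*a - η*b + 1 = 0) (Imeq : 2*a*b + E*b + η*a = 0) :
    (|E| ≤ 2 →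
      1/1000 * Real.sqrt (min |E - 2| |E + 2| + η) ≤ b ∧
      b ≤ 1000 * Real.sqrt (min |E - 2| |E + 2| + η)) ∧
    (2 < |E| →
      1/1000 * (η / Real.sqrt (min |E - 2| |E + 2| + η)) ≤ b ∧
      b ≤ 1000 * (η / Real.sqrt (min |E - 2| |E + 2| + η))) := by
  set r2 : ℝ := a^2 + b^2 with hr2
  have hr2pos : 0 < r2 := by positivity
  have P1 : b * (1 - r2) = η * r2 := by linear_combination b*Req - a*Imeq
  have P2 : E * r2 = -(a*(1+r2)) := by linear_combination a*Req + b*Imeq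
  have P3 : r2 < 1 := by nlinarith [mul_pos hη hr2pos, hb]
  have P4 : r2 * ((a+E)^2 + (b+η)^2) = 1 := by
    linear_combination (a^2-b^2+E*a-η*b-1)*Req + (2*a*b+E*b+η*a)*Imeq
  have hE25 : E^2 ≤ 25 := by nlinarith [abs_le.mp hE5, _root_.sq_abs E]
  have hη100 : η^2 ≤ 100 := lem_eta_sq η hη hη10
  have P5 : 1/254 ≤ r2 := by
    have hM : (a+E)^2 + (b+η)^2 ≤ 254 := by
      have h1 := sq_nonneg (a-E)
      have h2 := sq_nonneg (b-η)
      have h3 := sq_nonneg a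
      have h4 := sq_nonneg b
      linarith [P3, hE25, hη100]
    have h5 := mul_le_mul_of_nonneg_left hM hr2pos.le
    linarith [P4, h5]
  have id1 : ((E-2)^2 + η^2) * r2 = ((a+1)^2 + b^2)^2 := by
    linear_combination ((E-2)*a - η*b - ((a+1)^2 - b^2)) * Req + ((E-2)*b + η*a - 2*(a+1)*b) * Imeq
  have id2 : ((E+2)^2 + η^2) * r2 = ((a-1)^2 + b^2)^2 := by
    linear_combination ((E+2)*a - η*b - ((a-1)^2 - b^2)) * Req + ((E+2)*b + η*a - 2*(a-1)*b) * Imeq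
  clear_value r2
  set K : ℝ := min |E - 2| |E + 2| with hKdef
  have hK0 : 0 ≤ K := le_min (abs_nonneg _) (abs_nonneg _)
  set D : ℝ := min ((a-1)^2 + b^2) ((a+1)^2 + b^2) with hDdef
  have hD0 : 0 < D := lt_min (by positivity) (by positivity)
  have Dsq : D^2 = r2 * (K^2 + η^2) := by
    rcases le_total |E - 2| |E + 2| with h | h
    · have hK : K = |E - 2| := min_eq_left h
      have h2 : (E-2)^2 ≤ (E+2)^2 := by
        have h1 := mul_self_le_mul_self (abs_nonneg (E-2)) h
        linarith [_root_.sq_abs (E-2), _root_.sq_abs (E+2), h1]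
      have h3 : ((a+1)^2+b^2)^2 ≤ ((a-1)^2+b^2)^2 := by
        have := mul_le_mul_of_nonneg_right (show (E-2)^2+η^2 ≤ (E+2)^2+η^2 by linarith) hr2pos.le
        linarith [id1, id2]
      have h4 : (a+1)^2+b^2 ≤ (a-1)^2+b^2 :=
        le_of_sq_le_sq' (by positivity) h3
      have hDval : D = (a+1)^2+b^2 := min_eq_right h4
      rw [hDval, hK, _root_.sq_abs]
      linear_combination (-1 : ℝ) * id1
    · have hK : K = |E + 2| := min_eq_right h
      have h2 : (E+2)^2 ≤ (E-2)^2 := by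
        have h1 := mul_self_le_mul_self (abs_nonneg (E+2)) h
        linarith [_root_.sq_abs (E-2), _root_.sq_abs (E+2), h1]
      have h3 : ((a-1)^2+b^2)^2 ≤ ((a+1)^2+b^2)^2 := by
        have := mul_le_mul_of_nonneg_right (show (E+2)^2+η^2 ≤ (E-2)^2+η^2 by linarith) hr2pos.le
        linarith [id1, id2]
      have h4 : (a-1)^2+b^2 ≤ (a+1)^2+b^2 :=
        le_of_sq_le_sq' (by positivity) h3
      have hDval : D = (a-1)^2+b^2 := min_eq_left h4
      rw [hDval, hK, _root_.sq_abs]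
      linear_combination (-1 : ℝ) * id2
  have hbD : b^2 ≤ D := by
    rw [hDdef]
    refine le_min ?_ ?_ <;> [linarith [sq_nonneg (a-1)]; linarith [sq_nonneg (a+1)]]
  clear_value K D
  have hKη0 : 0 < K + η := by linarith
  have hDle : D ≤ K + η := by
    refine le_of_sq_le_sq' hKη0.le ?_
    have h1 := mul_nonneg hK0 hη.le
    have h2 := mul_nonneg (sub_nonneg.mpr P3.le) (show (0:ℝ) ≤ K^2 + η^2 by positivity)
    linarith [Dsq, h1, h2]
  have hDge : K + η ≤ 23 * D := by
    refine le_of_sq_le_sq' (by linarith) ?_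
    have h5 := mul_le_mul_of_nonneg_right P5 (show (0:ℝ) ≤ K^2 + η^2 by positivity)
    linarith [Dsq, h5, sq_nonneg (K - η), sq_nonneg K, sq_nonneg η]
  set t : ℝ := |a| with htdef
  have hta : t^2 = a^2 := sq_abs a
  have htb : t^2 + b^2 = r2 := by rw [hta, hr2]
  have ht0 : 0 ≤ t := abs_nonneg a
  have ht1 : t < 1 := by
    have ha1 : a^2 < 1 := by linarith [sq_nonneg b, hr2, P3]
    have := abs_lt.mpr (show -1 < a ∧ a < 1 by constructor <;> nlinarith [ha1])
    exact this
  have habs : |E| * r2 = t * (1 + r2) := by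
    have h1 : |E * r2| = |-(a * (1 + r2))| := by rw [P2]
    rwa [abs_mul, abs_neg, abs_mul, abs_of_pos hr2pos,
      abs_of_pos (by linarith : (0:ℝ) < 1 + r2)] at h1
  clear_value t
  have hDup : D ≤ (1-t)^2 + b^2 := by
    rcases abs_cases a with ⟨h1, _⟩ | ⟨h1, _⟩
    · have he : (a-1)^2 = (1-t)^2 := by rw [htdef, h1]; ring
      calc D ≤ (a-1)^2 + b^2 := hDdef ▸ min_le_left _ _
        _ = (1-t)^2 + b^2 := by rw [he]
    · have he : (a+1)^2 = (1-t)^2 := by rw [htdef, h1]; ring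
      calc D ≤ (a+1)^2 + b^2 := hDdef ▸ min_le_right _ _
        _ = (1-t)^2 + b^2 := by rw [he]
  have hDlow : (1-t)^2 + b^2 ≤ D := by
    rw [hDdef]
    refine le_min ?_ ?_
    · linarith [le_abs_self a, hta]
    · linarith [neg_abs_le a, hta]
  constructor
  · -- case |E| ≤ 2
    intro hE2
    have hA : t * (1 + r2) ≤ 2 * r2 := by
      rw [← habs]; exact mul_le_mul_of_nonneg_right hE2 hr2pos.le
    have hkey : (1 - t)^2 ≤ 1200 * b^2 := lem_key t b r2 htb P5 ht0 ht1 hA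
    have hmain : K + η ≤ 1000000 * b^2 := by linarith [hDge, hDup, hkey]
    constructor
    · have hS : Real.sqrt (K + η) ≤ 1000 * b := by
        refine sqrt_le_of_sq_le' (by positivity) ?_
        linarith [hmain]
      linarith
    · have hS : b ≤ Real.sqrt (K + η) := le_sqrt_of_sq_le' hb.le (by linarith [hbD, hDle])
      linarith [Real.sqrt_nonneg (K + η), hS]
  · -- case 2 < |E|
    intro hE2
    have hSpos : 0 < Real.sqrt (K + η) := Real.sqrt_pos.mpr hKη0
    have hsq : (Real.sqrt (K + η))^2 = K + η := Real.sq_sqrt hKη0.le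
    have hA2 : 2 * r2 ≤ t * (1 + r2) := by
      rw [← habs]; exact mul_le_mul_of_nonneg_right hE2.le hr2pos.le
    have h1t : 1 - t ≤ 1 - r2 := by
      have h1 := mul_le_mul_of_nonneg_left P3.le ht0
      linarith [hA2, h1]
    have hb2 : b^2 ≤ (1-r2)^2 := lem_b2 t b r2 htb hr2pos P3 ht0 hA2
    have hD2 : D ≤ 2*(1-r2)^2 := by
      have h2 : (1-t)^2 ≤ (1-r2)^2 := sq_le_sq'' (by linarith) h1t
      linarith [hDup, hb2]
    have hηb : b*(1-r2) ≤ η := by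
      have h1 := mul_nonneg hη.le (sub_nonneg.mpr P3.le)
      linarith [P1, h1]
    have hηb2 : η ≤ 254 * (b*(1-r2)) := by
      have h1 := mul_nonneg (sub_nonneg.mpr P5) hη.le
      linarith [P1, h1]
    have hr2t : 1 - r2 ≤ 2*(1-t) := by
      linarith [sq_nonneg (1-t), htb, sq_nonneg b]
    have hC : η^2 ≤ 1000000 * (b^2 * (K+η)) := by
      have h1 : η^2 ≤ (254 * (b*(1-r2)))^2 := sq_le_sq'' hη.le hηb2
      have h2 : (1-r2)^2 ≤ 4*(K+η) := by
        have h3 : (1-r2)^2 ≤ (2*(1-t))^2 := sq_le_sq'' (by linarith) hr2t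
        linarith [h3, hDlow, hDle, sq_nonneg b]
      have h4 := mul_le_mul_of_nonneg_left h2 (sq_nonneg b)
      have h5 := mul_nonneg (sq_nonneg b) hKη0.le
      linarith [h1, h4, h5]
    have hDineq : b^2 * (K+η) ≤ 1000000 * η^2 := by
      have h1 : K + η ≤ 46*(1-r2)^2 := by linarith [hDge, hD2]
      have h2 : (b*(1-r2))^2 ≤ η^2 := sq_le_sq'' (mul_nonneg hb.le (by linarith)) hηb
      have h3 := mul_le_mul_of_nonneg_left h1 (sq_nonneg b)
      linarith [h2, h3, sq_nonneg η]
    constructor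
    · have hg : η ≤ 1000 * b * Real.sqrt (K + η) := by
        refine le_of_sq_le_sq' (by positivity) ?_
        calc η^2 ≤ 1000000 * (b^2 * (K+η)) := hC
          _ = (1000 * b * Real.sqrt (K + η))^2 := by rw [mul_pow, hsq]; ring
      rw [show (1:ℝ)/1000 * (η / Real.sqrt (K+η)) = η / (1000 * Real.sqrt (K+η)) by ring,
        div_le_iff₀ (by positivity)]
      linarith [hg]
    · have hg : b * Real.sqrt (K + η) ≤ 1000 * η := by
        refine le_of_sq_le_sq' (by positivity) ?_
        calc (b * Real.sqrt (K + η))^2 = b^2 * (K+η) := by rw [mul_pow, hsq]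
          _ ≤ 1000000 * η^2 := hDineq
          _ = (1000*η)^2 := by ring
      rw [← mul_div_assoc, le_div_iff₀ hSpos]
      linarith [hg]

/-- For `z = E + iη` with `|E| ≤ 5`, `0 < η ≤ 10`, `Im m_sc(z)` is comparable to
`√(κ+η)` when `|E| ≤ 2` and to `η/√(κ+η)` when `|E| > 2`, where
`κ = min(|E-2|, |E+2|)`. -/
theorem im_msc_bounds (m : ℂ → ℂ)
    (hanalytic : AnalyticOn ℂ m {z : ℂ | 0 < z.im})
    (hmap : ∀ z : ℂ, 0 < z.im → 0 < (m z).im)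
    (heq : ∀ z : ℂ, 0 < z.im → (m z) ^ 2 + z * m z + 1 = 0) :
    ∃ c C : ℝ, 0 < c ∧ 0 < C ∧ ∀ E η : ℝ, |E| ≤ 5 → 0 < η → η ≤ 10 →
      (|E| ≤ 2 →
        c * Real.sqrt (min |E - 2| |E + 2| + η) ≤ (m (E + η * Complex.I)).im ∧
        (m (E + η * Complex.I)).im ≤ C * Real.sqrt (min |E - 2| |E + 2| + η)) ∧
      (2 < |E| →
        c * (η / Real.sqrt (min |E - 2| |E + 2| + η)) ≤ (m (E + η * Complex.I)).im ∧
        (m (E + η * Complex.I)).im ≤ C * (η / Real.sqrt (min |E - 2| |E + 2| + η))) := by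
  refine ⟨1/1000, 1000, by norm_num, by norm_num, ?_⟩
  intro E η hE5 hη hη10
  set z : ℂ := E + η * Complex.I with hzdef
  have hzim : (0:ℝ) < z.im := by simp [hzdef, hη]
  have hb : 0 < (m z).im := hmap z hzim
  have h0 := heq z hzim
  set a : ℝ := (m z).re with ha
  set b : ℝ := (m z).im with hbdef
  have Req : a^2 - b^2 + E*a - η*b + 1 = 0 := by
    have h1 : ((m z)^2 + z * m z + 1).re = 0 := by rw [h0]; rfl
    simp only [Complex.add_re, Complex.mul_re, Complex.one_re, pow_two, hzdef,
      Complex.ofReal_re, Complex.ofReal_im, Complex.I_re, Complex.I_im,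
      Complex.add_im, Complex.mul_im] at h1
    ring_nf at h1 ⊢
    linarith [h1]
  have Imeq : 2*a*b + E*b + η*a = 0 := by
    have h1 : ((m z)^2 + z * m z + 1).im = 0 := by rw [h0]; rfl
    simp only [Complex.add_re, Complex.mul_re, Complex.one_im, pow_two, hzdef,
      Complex.ofReal_re, Complex.ofReal_im, Complex.I_re, Complex.I_im,
      Complex.add_im, Complex.mul_im] at h1
    ring_nf at h1 ⊢
    linarith [h1]
  exact msc_real_bounds E η a b hE5 hη hη10 hb Req Imeq
end

section
/- For z in the domain D = {E + iη : |E| ≤ 5, 0 < η ≤ 10}, the derivative of m_sc satisfies |m_sc'(z)| ∼ 1/√(κ+η) and the second derivative satisfies |m_sc''(z)| = O(1/(κ+η)^{3/2}), where κ = min(|E-2|, |E+2|). -/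
/-!
With `w = 2 m + z` the equation reads `w ^ 2 = z ^ 2 - 4`, so `|w| ^ 2 = |z - 2| |z + 2|`, which is
comparable to `κ + η` on `D`; and `m (m + z) = -1` keeps `|m|` bounded above and below there.
Differentiating the equation once and twice gives `m' w = -m` and `m'' w = -2 m' (m' + 1)`, hence
`|m'| = |m| / |w| ∼ (κ + η)^(-1/2)` and `|m''| ≲ (|m'| ^ 2 + |m'|) / |w| ≲ (κ + η)^(-3/2)`.
-/

open Complex

section Quadratic

variable {a z : ℂ}

theorem norm_le_norm_add_one_of_quadratic (h : a ^ 2 + z * a + 1 = 0) : ‖a‖ ≤ ‖z‖ + 1 := by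
  have hsq : ‖a‖ ^ 2 ≤ ‖z‖ * ‖a‖ + 1 := by
    calc ‖a‖ ^ 2 = ‖-(z * a + 1)‖ := by rw [← norm_pow]; congr 1; linear_combination h
      _ ≤ ‖z‖ * ‖a‖ + 1 := by rw [norm_neg]; simpa using norm_add_le (z * a) 1
  nlinarith [norm_nonneg a, norm_nonneg z]

theorem inv_le_norm_of_quadratic (h : a ^ 2 + z * a + 1 = 0) : (2 * ‖z‖ + 1)⁻¹ ≤ ‖a‖ := by
  have hprod : ‖a‖ * ‖a + z‖ = 1 := by
    rw [← norm_mul, show a * (a + z) = -1 by linear_combination h, norm_neg, norm_one]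
  have hsum : ‖a + z‖ ≤ 2 * ‖z‖ + 1 := by
    linarith [norm_add_le a z, norm_le_norm_add_one_of_quadratic h]
  rw [inv_le_iff_one_le_mul₀ (by positivity)]
  nlinarith [norm_nonneg a]

theorem norm_two_mul_add_sq_of_quadratic (h : a ^ 2 + z * a + 1 = 0) :
    ‖2 * a + z‖ ^ 2 = ‖z - 2‖ * ‖z + 2‖ := by
  rw [← norm_pow, ← norm_mul]
  congr 1
  linear_combination 4 * h

end Quadratic

section Derivatives

variable {U : Set ℂ} {m : ℂ → ℂ} {w : ℂ}

theorem deriv_mul_two_mul_add_of_quadratic (hU : IsOpen U) (hm : DifferentiableOn ℂ m U)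
    (heq : ∀ z ∈ U, m z ^ 2 + z * m z + 1 = 0) (hw : w ∈ U) :
    deriv m w * (2 * m w + w) = -m w := by
  have hdm : HasDerivAt m (deriv m w) w := (hm.differentiableAt (hU.mem_nhds hw)).hasDerivAt
  have hderiv := ((hdm.pow 2).add ((hasDerivAt_id' w).mul hdm)).add_const 1
  have hzero : (fun z => m z ^ 2 + z * m z + 1) =ᶠ[nhds w] fun _ => 0 :=
    Filter.eventually_of_mem (hU.mem_nhds hw) heq
  linear_combination (hderiv.congr_of_eventuallyEq hzero.symm).unique (hasDerivAt_const w 0)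

theorem deriv_deriv_mul_two_mul_add_of_quadratic (hU : IsOpen U) (hm : AnalyticOnNhd ℂ m U)
    (heq : ∀ z ∈ U, m z ^ 2 + z * m z + 1 = 0) (hw : w ∈ U) :
    deriv (deriv m) w * (2 * m w + w) = -(2 * deriv m w * (deriv m w + 1)) := by
  have hdm : HasDerivAt m (deriv m w) w := (hm w hw).differentiableAt.hasDerivAt
  have hddm : HasDerivAt (deriv m) (deriv (deriv m) w) w :=
    (hm.deriv w hw).differentiableAt.hasDerivAt
  have hderiv := (hddm.mul ((hdm.const_mul 2).add (hasDerivAt_id' w))).add hdm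
  simp only [Pi.add_apply] at hderiv
  have hzero : (fun z => deriv m z * (2 * m z + z) + m z) =ᶠ[nhds w] fun _ => 0 := by
    filter_upwards [hU.mem_nhds hw] with z hz
    linear_combination deriv_mul_two_mul_add_of_quadratic hU hm.differentiableOn heq hz
  linear_combination (hderiv.congr_of_eventuallyEq hzero.symm).unique (hasDerivAt_const w 0)

theorem norm_deriv_mul_norm_two_mul_add_of_quadratic (hU : IsOpen U)
    (hm : DifferentiableOn ℂ m U) (heq : ∀ z ∈ U, m z ^ 2 + z * m z + 1 = 0) (hw : w ∈ U) :
    ‖deriv m w‖ * ‖2 * m w + w‖ = ‖m w‖ := by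
  rw [← norm_mul, deriv_mul_two_mul_add_of_quadratic hU hm heq hw, norm_neg]

theorem norm_deriv_deriv_mul_norm_two_mul_add_le_of_quadratic (hU : IsOpen U)
    (hm : AnalyticOnNhd ℂ m U) (heq : ∀ z ∈ U, m z ^ 2 + z * m z + 1 = 0) (hw : w ∈ U) :
    ‖deriv (deriv m) w‖ * ‖2 * m w + w‖ ≤ 2 * ‖deriv m w‖ * (‖deriv m w‖ + 1) := by
  rw [← norm_mul, deriv_deriv_mul_two_mul_add_of_quadratic hU hm heq hw, norm_neg, norm_mul,
    norm_mul, Complex.norm_two]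
  gcongr
  exact (norm_add_le _ _).trans_eq (by rw [norm_one])

end Derivatives

section Edges

theorem abs_re_add_abs_im_le_two_mul_norm (w : ℂ) : |w.re| + |w.im| ≤ 2 * ‖w‖ := by
  linarith [abs_re_le_norm w, abs_im_le_norm w]

variable (E : ℝ) {η : ℝ}

/- `κ + η` is the smaller of the `ℓ¹` distances from `E + η i` to `±2`, and the larger of the two
lies between `2` and `|E| + 2 + η`. -/

theorem min_abs_add_le_two_mul_norm_mul_norm (hη : 0 ≤ η) :
    min |E - 2| |E + 2| + η ≤ 2 * (‖(E + η * I : ℂ) - 2‖ * ‖(E + η * I : ℂ) + 2‖) := by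
  set a := |E - 2| + η
  set b := |E + 2| + η
  have hmin : 0 ≤ min a b := le_min (by positivity) (by positivity)
  have hmax : 2 ≤ max a b := by
    rw [le_max_iff]
    by_contra! h
    linarith [le_abs_self (E + 2), neg_le_abs (E - 2)]
  have ha : a ≤ 2 * ‖(E + η * I : ℂ) - 2‖ := by
    simpa [abs_of_nonneg hη] using abs_re_add_abs_im_le_two_mul_norm ((E + η * I : ℂ) - 2)
  have hb : b ≤ 2 * ‖(E + η * I : ℂ) + 2‖ := by
    simpa [abs_of_nonneg hη] using abs_re_add_abs_im_le_two_mul_norm ((E + η * I : ℂ) + 2)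
  rw [← min_add_add_right]
  nlinarith [min_mul_max a b, mul_le_mul ha hb (by positivity) (by positivity)]

theorem norm_mul_norm_le_mul_min_abs_add (hη : 0 ≤ η) :
    ‖(E + η * I : ℂ) - 2‖ * ‖(E + η * I : ℂ) + 2‖ ≤ (|E| + 2 + η) * (min |E - 2| |E + 2| + η) := by
  set a := |E - 2| + η
  set b := |E + 2| + η
  have ha : ‖(E + η * I : ℂ) - 2‖ ≤ a := by
    simpa [abs_of_nonneg hη] using norm_le_abs_re_add_abs_im ((E + η * I : ℂ) - 2)
  have hb : ‖(E + η * I : ℂ) + 2‖ ≤ b := by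
    simpa [abs_of_nonneg hη] using norm_le_abs_re_add_abs_im ((E + η * I : ℂ) + 2)
  have hmax : max a b ≤ |E| + 2 + η := by
    have h2 : |(2 : ℝ)| = 2 := abs_two
    exact max_le (by linarith [abs_sub E 2]) (by linarith [abs_add_le E 2])
  calc ‖(E + η * I : ℂ) - 2‖ * ‖(E + η * I : ℂ) + 2‖ ≤ a * b := by gcongr
    _ = max a b * min a b := (min_mul_max a b).symm.trans (mul_comm _ _)
    _ ≤ (|E| + 2 + η) * (min |E - 2| |E + 2| + η) := by
      rw [min_add_add_right]
      gcongr

end Edges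

theorem bounds_of_quadratic_of_mem_domain {E η : ℝ} {a : ℂ} (hE : |E| ≤ 5) (hη : 0 ≤ η)
    (hη10 : η ≤ 10) (h : a ^ 2 + (E + η * I) * a + 1 = 0) :
    1 / 31 ≤ ‖a‖ ∧ ‖a‖ ≤ 16 ∧
      √(min |E - 2| |E + 2| + η) / 2 ≤ ‖2 * a + (E + η * I)‖ ∧
      ‖2 * a + (E + η * I)‖ ≤ 5 * √(min |E - 2| |E + 2| + η) := by
  have hz : ‖(E + η * I : ℂ)‖ ≤ 15 := by
    calc ‖(E + η * I : ℂ)‖ ≤ |E| + |η| := by simpa using norm_le_abs_re_add_abs_im (E + η * I)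
      _ ≤ 15 := by rw [abs_of_nonneg hη]; linarith
  have ht : 0 ≤ min |E - 2| |E + 2| + η := by positivity
  have hs := norm_two_mul_add_sq_of_quadratic h
  have hlo := min_abs_add_le_two_mul_norm_mul_norm E hη
  have hhi := norm_mul_norm_le_mul_min_abs_add E hη
  refine ⟨?_, by linarith [norm_le_norm_add_one_of_quadratic h], ?_, ?_⟩
  · refine le_trans ?_ (inv_le_norm_of_quadratic h)
    rw [one_div]
    gcongr
    linarith
  · refine (pow_le_pow_iff_left₀ (by positivity) (norm_nonneg _) two_ne_zero).mp ?_
    rw [div_pow, Real.sq_sqrt ht, hs]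
    linarith
  · refine (pow_le_pow_iff_left₀ (norm_nonneg _) (by positivity) two_ne_zero).mp ?_
    rw [mul_pow, Real.sq_sqrt ht, hs]
    nlinarith

theorem inv_sqrt_bounds_of_mul_eq {t s M D A : ℝ} (ht : 0 < t) (ht25 : t ≤ 25)
    (hM_lo : 1 / 31 ≤ M) (hM_hi : M ≤ 16) (hs_lo : √t / 2 ≤ s) (hs_hi : s ≤ 5 * √t)
    (hD : D * s = M) (hA : A * s ≤ 2 * D * (D + 1)) :
    1 / 155 * (1 / √t) ≤ D ∧ D ≤ 5000 * (1 / √t) ∧ A ≤ 5000 * (1 / √(t ^ 3)) := by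
  set u := √t
  have hu : 0 < u := Real.sqrt_pos.mpr ht
  have hu5 : u ≤ 5 := (Real.sqrt_le_left (by norm_num)).mpr (by linarith)
  have hu3 : √(t ^ 3) = u ^ 3 := by
    rw [Real.sqrt_eq_iff_mul_self_eq_of_pos (by positivity), ← Real.sq_sqrt ht.le]
    ring
  have hs0 : 0 < s := by linarith
  have hD_eq : D = M / s := eq_div_of_mul_eq hs0.ne' hD
  have hD_hi : D ≤ 32 / u := by
    calc D ≤ 16 / (u / 2) := by rw [hD_eq]; gcongr
      _ = 32 / u := by ring
  refine ⟨?_, hD_hi.trans (by rw [mul_one_div]; gcongr; norm_num), ?_⟩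
  · calc 1 / 155 * (1 / u) = (1 / 31) / (5 * u) := by ring
      _ ≤ D := by rw [hD_eq]; exact div_le_div₀ (by linarith) hM_lo hs0 hs_hi
  · have hD0 : 0 ≤ D := by rw [hD_eq]; exact div_nonneg (by linarith) hs0.le
    calc A ≤ 2 * D * (D + 1) / s := (le_div_iff₀ hs0).mpr hA
      _ ≤ 2 * (32 / u) * (32 / u + 1) / (u / 2) := by gcongr
      _ = 128 * (32 + u) / u ^ 3 := by field_simp; ring
      _ ≤ 5000 * (1 / √(t ^ 3)) := by rw [hu3, mul_one_div]; gcongr; linarith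

theorem deriv_msc_bounds_general (m : ℂ → ℂ)
    (hanalytic : AnalyticOn ℂ m {z : ℂ | 0 < z.im})
    (heq : ∀ z : ℂ, 0 < z.im → (m z) ^ 2 + z * m z + 1 = 0) :
    ∃ c C : ℝ, 0 < c ∧ 0 < C ∧ ∀ E η : ℝ, |E| ≤ 5 → 0 < η → η ≤ 10 →
      c * (1 / Real.sqrt (min |E - 2| |E + 2| + η))
          ≤ ‖deriv m (E + η * Complex.I)‖ ∧
      ‖deriv m (E + η * Complex.I)‖
          ≤ C * (1 / Real.sqrt (min |E - 2| |E + 2| + η)) ∧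
      ‖deriv (deriv m) (E + η * Complex.I)‖
          ≤ C * (1 / Real.sqrt ((min |E - 2| |E + 2| + η) ^ 3)) := by
  have hU : IsOpen {z : ℂ | 0 < z.im} := isOpen_lt continuous_const continuous_im
  have hm : AnalyticOnNhd ℂ m {z : ℂ | 0 < z.im} := hU.analyticOn_iff_analyticOnNhd.mp hanalytic
  refine ⟨1 / 155, 5000, by norm_num, by norm_num, fun E η hE hη hη10 => ?_⟩
  have hz : (E + η * I : ℂ) ∈ {z : ℂ | 0 < z.im} := by simpa
  have hmz := heq _ hz
  obtain ⟨hM_lo, hM_hi, hs_lo, hs_hi⟩ := bounds_of_quadratic_of_mem_domain hE hη.le hη10 hmz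
  have ht25 : min |E - 2| |E + 2| + η ≤ 25 := by
    linarith [min_le_left |E - 2| |E + 2|, abs_sub E 2, abs_two (α := ℝ)]
  exact inv_sqrt_bounds_of_mul_eq (by positivity) ht25 hM_lo hM_hi hs_lo hs_hi
    (norm_deriv_mul_norm_two_mul_add_of_quadratic hU hm.differentiableOn heq hz)
    (norm_deriv_deriv_mul_norm_two_mul_add_le_of_quadratic hU hm heq hz)

/-- On the domain `D`, `|m_sc'(z)| ∼ 1/√(κ+η)` and `|m_sc''(z)| = O((κ+η)^{-3/2})`,
where `κ = min(|E-2|, |E+2|)`. -/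
theorem deriv_msc_bounds (m : ℂ → ℂ)
    (hanalytic : AnalyticOn ℂ m {z : ℂ | 0 < z.im})
    (hmap : ∀ z : ℂ, 0 < z.im → 0 < (m z).im)
    (heq : ∀ z : ℂ, 0 < z.im → (m z) ^ 2 + z * m z + 1 = 0) :
    ∃ c C : ℝ, 0 < c ∧ 0 < C ∧ ∀ E η : ℝ, |E| ≤ 5 → 0 < η → η ≤ 10 →
      c * (1 / Real.sqrt (min |E - 2| |E + 2| + η))
          ≤ ‖deriv m (E + η * Complex.I)‖ ∧
      ‖deriv m (E + η * Complex.I)‖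
          ≤ C * (1 / Real.sqrt (min |E - 2| |E + 2| + η)) ∧
      ‖deriv (deriv m) (E + η * Complex.I)‖
          ≤ C * (1 / Real.sqrt ((min |E - 2| |E + 2| + η) ^ 3)) :=
  deriv_msc_bounds_general m hanalytic heq
end

section
/- Let h be a real-valued random variable with all moments finite and let f: ℝ → ℂ be smooth with bounded derivatives. Then E[h·f(h)] = c^{(1)}(h)·E[f(h)] + c^{(2)}(h)·E[f'(h)] + R₂, where the remainder satisfies |R₂| ≤ C·E[|h|³]·sup_{x∈ℝ}|f''(x)| for an absolute constant C. -/
open MeasureTheory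

noncomputable def cumulant {Ω : Type*} [MeasurableSpace Ω] (μ : Measure Ω)
    (h : Ω → ℝ) (k : ℕ) : ℂ :=
  (-Complex.I) ^ k *
    iteratedDeriv k
      (fun t : ℝ => Complex.log (∫ ω, Complex.exp (Complex.I * t * h ω) ∂μ)) 0

open Complex

variable {Ω : Type} [MeasurableSpace Ω] {μ : Measure Ω}

lemma norm_exp_I_mul (t : ℝ) (x : ℝ) : ‖Complex.exp (Complex.I * t * x)‖ = 1 := by
  rw [Complex.norm_exp]
  simp [Complex.mul_re]

lemma charDeriv (h : Ω → ℝ) (hm : Measurable h)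
    (g : Ω → ℂ) (hg : Measurable g) (b : Ω → ℝ) (hgb : ∀ ω, ‖g ω‖ ≤ b ω)
    (hint : Integrable b μ)
    (hint2 : Integrable (fun ω => |h ω| * b ω) μ) (t₀ : ℝ) :
    HasDerivAt (fun t : ℝ => ∫ ω, g ω * Complex.exp (Complex.I * t * h ω) ∂μ)
      (∫ ω, (Complex.I * h ω) * (g ω * Complex.exp (Complex.I * t₀ * h ω)) ∂μ) t₀ := by
  have hexpm : ∀ t : ℝ, Measurable (fun ω => Complex.exp (Complex.I * t * h ω)) := by
    intro t
    exact Complex.measurable_exp.comp ((measurable_const.mul (Complex.measurable_ofReal.comp hm)))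
  have key := hasDerivAt_integral_of_dominated_loc_of_deriv_le
    (F := fun (t : ℝ) (ω : Ω) => g ω * Complex.exp (Complex.I * t * h ω))
    (F' := fun (t : ℝ) (ω : Ω) => (Complex.I * h ω) * (g ω * Complex.exp (Complex.I * t * h ω)))
    (x₀ := t₀) (bound := fun ω => |h ω| * b ω) (s := Metric.ball t₀ 1) (Metric.ball_mem_nhds t₀ one_pos)
    ?_ ?_ ?_ ?_ hint2 ?_
  · exact key.2
  · filter_upwards with t
    exact (hg.mul (hexpm t)).aestronglyMeasurable
  · refine Integrable.mono' hint (hg.mul (hexpm t₀)).aestronglyMeasurable ?_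
    filter_upwards with ω
    rw [norm_mul, norm_exp_I_mul, mul_one]
    exact hgb ω
  · exact ((measurable_const.mul (Complex.measurable_ofReal.comp hm)).mul
      (hg.mul (hexpm t₀))).aestronglyMeasurable
  · filter_upwards with ω t _
    rw [norm_mul, norm_mul, norm_mul, norm_exp_I_mul, mul_one, Complex.norm_I, one_mul,
      Complex.norm_real, Real.norm_eq_abs]
    exact mul_le_mul_of_nonneg_left (hgb ω) (abs_nonneg _)
  · filter_upwards with ω t _
    have hinner : HasDerivAt (fun t : ℝ => Complex.I * t * h ω) (Complex.I * h ω) t := by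
      have : HasDerivAt (fun t : ℝ => (t : ℂ)) 1 t := Complex.ofRealCLM.hasDerivAt
      simpa [mul_comm, mul_assoc, mul_left_comm] using (this.const_mul Complex.I).mul_const (h ω : ℂ)
    simpa [mul_comm, mul_assoc, mul_left_comm] using hinner.cexp.const_mul (g ω)

section cum
variable (hprob : IsProbabilityMeasure μ) (h : Ω → ℝ) (hm : Measurable h)
  (hint1 : Integrable (fun ω => |h ω|) μ) (hint2 : Integrable (fun ω => |h ω| ^ 2) μ)

include hprob hm hint1 hint2

lemma cumulant_vals :
    cumulant μ h 1 = ((∫ ω, h ω ∂μ : ℝ) : ℂ) ∧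
    cumulant μ h 2 = ((∫ ω, (h ω)^2 ∂μ : ℝ) : ℂ) - ((∫ ω, h ω ∂μ : ℝ) : ℂ)^2 := by
  set φ : ℝ → ℂ := fun t => ∫ ω, Complex.exp (Complex.I * t * h ω) ∂μ with hφdef
  set φ₁ : ℝ → ℂ := fun t => ∫ ω, (Complex.I * h ω) * Complex.exp (Complex.I * t * h ω) ∂μ with hφ₁def
  set φ₂ : ℝ → ℂ := fun t =>
    ∫ ω, (Complex.I * h ω) * ((Complex.I * h ω) * Complex.exp (Complex.I * t * h ω)) ∂μ with hφ₂def
  have habs2 : ∀ ω, |h ω| * |h ω| = |h ω| ^ 2 := fun ω => (sq (|h ω|)).symm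
  have hint2' : Integrable (fun ω => |h ω| * |h ω|) μ := by
    simpa only [habs2] using hint2
  have hφ : ∀ t, HasDerivAt φ (φ₁ t) t := by
    intro t
    have := charDeriv h hm (fun _ => 1) measurable_const (fun _ => 1) (by simp)
      (integrable_const 1) (by simpa using hint1) t
    simpa only [one_mul, hφdef, hφ₁def] using this
  have hφ₁ : ∀ t, HasDerivAt φ₁ (φ₂ t) t := by
    intro t
    exact charDeriv h hm (fun ω => Complex.I * h ω)
      (measurable_const.mul (Complex.measurable_ofReal.comp hm))
      (fun ω => |h ω|) (fun ω => by
        rw [norm_mul, Complex.norm_I, one_mul, Complex.norm_real, Real.norm_eq_abs])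
      hint1 hint2' t
  have hφ0 : φ 0 = 1 := by
    simp [hφdef, integral_const]
  have hφ₁0 : φ₁ 0 = Complex.I * ((∫ ω, h ω ∂μ : ℝ) : ℂ) := by
    simp only [hφ₁def, Complex.ofReal_zero, mul_zero, zero_mul, Complex.exp_zero, mul_one]
    rw [integral_const_mul]
    exact congrArg (Complex.I * ·) (integral_ofReal (𝕜 := ℂ) (f := fun ω => h ω) (μ := μ))
  have hφ₂0 : φ₂ 0 = -((∫ ω, (h ω)^2 ∂μ : ℝ) : ℂ) := by
    have : ∀ ω, (Complex.I * h ω) * ((Complex.I * h ω) * Complex.exp (Complex.I * (0:ℝ) * h ω))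
        = -(((h ω)^2 : ℝ) : ℂ) := by
      intro ω
      simp only [Complex.ofReal_zero, mul_zero, zero_mul, Complex.exp_zero, mul_one]
      push_cast
      ring_nf
      rw [Complex.I_sq]
      ring
    rw [hφ₂def]
    simp only [this]
    rw [integral_neg]
    exact congrArg Neg.neg (integral_ofReal (𝕜 := ℂ) (f := fun ω => h ω ^ 2) (μ := μ))
  have hcont : Continuous φ := Differentiable.continuous (fun t => (hφ t).differentiableAt)
  have hone : (1 : ℂ) ∈ Complex.slitPlane := by
    simp [Complex.mem_slitPlane_iff]
  have hs : ∀ᶠ t in nhds (0:ℝ), φ t ∈ Complex.slitPlane := by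
    have : φ ⁻¹' Complex.slitPlane ∈ nhds (0:ℝ) :=
      hcont.continuousAt.preimage_mem_nhds (Complex.isOpen_slitPlane.mem_nhds (hφ0 ▸ hone))
    exact this
  have hg : ∀ᶠ t in nhds (0:ℝ), HasDerivAt (fun t => Complex.log (φ t)) (φ₁ t / φ t) t :=
    hs.mono fun t ht => (hφ t).clog_real ht
  have hderiv_ev : deriv (fun t => Complex.log (φ t)) =ᶠ[nhds (0:ℝ)] fun t => φ₁ t / φ t :=
    hg.mono fun t ht => ht.deriv
  have e1 : deriv (fun t => Complex.log (φ t)) 0 = φ₁ 0 / φ 0 := hg.self_of_nhds.deriv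
  have hq : HasDerivAt (fun t => φ₁ t / φ t)
      ((φ₂ 0 * φ 0 - φ₁ 0 * φ₁ 0) / φ 0 ^ 2) 0 :=
    (hφ₁ 0).div (hφ 0) (by rw [hφ0]; exact one_ne_zero)
  have e2 : deriv (deriv (fun t => Complex.log (φ t))) 0
      = (φ₂ 0 * φ 0 - φ₁ 0 * φ₁ 0) / φ 0 ^ 2 := by
    rw [hderiv_ev.deriv_eq]
    exact hq.deriv
  constructor
  · show (-Complex.I) ^ 1 * iteratedDeriv 1 (fun t => Complex.log (φ t)) 0 = _
    rw [pow_one, iteratedDeriv_one, e1, hφ0, hφ₁0]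
    rw [div_one]
    ring_nf
    rw [Complex.I_sq]
    ring
  · show (-Complex.I) ^ 2 * iteratedDeriv 2 (fun t => Complex.log (φ t)) 0 = _
    rw [show (2:ℕ) = 1 + 1 from rfl, iteratedDeriv_succ, iteratedDeriv_one, e2,
      hφ0, hφ₁0, hφ₂0]
    ring_nf
    simp [Complex.I_pow_four]
end cum
open MeasureTheory

variable {Ω : Type} [MeasurableSpace Ω] {μ : Measure Ω}

/-- Cauchy–Schwarz for integrals of nonneg functions. -/
lemma my_cs (u v : Ω → ℝ) (hu : ∀ ω, 0 ≤ u ω) (hv : ∀ ω, 0 ≤ v ω)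
    (hum : AEStronglyMeasurable u μ) (hvm : AEStronglyMeasurable v μ)
    (hu2 : Integrable (fun ω => u ω ^ 2) μ) (hv2 : Integrable (fun ω => v ω ^ 2) μ) :
    (∫ ω, u ω * v ω ∂μ) ^ 2 ≤ (∫ ω, u ω ^ 2 ∂μ) * (∫ ω, v ω ^ 2 ∂μ) := by
  have hpq : Real.HolderConjugate 2 2 := ⟨by norm_num, by norm_num, by norm_num⟩
  have hmu : MemLp u (ENNReal.ofReal 2) μ := by
    rw [show ENNReal.ofReal 2 = 2 by norm_num]
    exact (memLp_two_iff_integrable_sq hum).2 (by simpa [sq] using hu2)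
  have hmv : MemLp v (ENNReal.ofReal 2) μ := by
    rw [show ENNReal.ofReal 2 = 2 by norm_num]
    exact (memLp_two_iff_integrable_sq hvm).2 (by simpa [sq] using hv2)
  have key := integral_mul_le_Lp_mul_Lq_of_nonneg hpq
    (Filter.Eventually.of_forall hu) (Filter.Eventually.of_forall hv) hmu hmv
  have h2 : ∀ x : ℝ, x ^ (2:ℝ) = x ^ 2 := fun x => by
    rw [show (2:ℝ) = ((2:ℕ):ℝ) by norm_num, Real.rpow_natCast]
  simp only [h2] at key
  have hnn : 0 ≤ ∫ ω, u ω * v ω ∂μ :=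
    integral_nonneg fun ω => mul_nonneg (hu ω) (hv ω)
  have ha : 0 ≤ ∫ ω, u ω ^ 2 ∂μ := integral_nonneg fun ω => sq_nonneg _
  have hb : 0 ≤ ∫ ω, v ω ^ 2 ∂μ := integral_nonneg fun ω => sq_nonneg _
  calc (∫ ω, u ω * v ω ∂μ) ^ 2
      ≤ ((∫ ω, u ω ^ 2 ∂μ) ^ (1/2:ℝ) * (∫ ω, v ω ^ 2 ∂μ) ^ (1/2:ℝ)) ^ 2 :=
        pow_le_pow_left₀ hnn key 2
    _ = (∫ ω, u ω ^ 2 ∂μ) * (∫ ω, v ω ^ 2 ∂μ) := by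
        rw [mul_pow, ← Real.rpow_natCast (_ ^ (1/2:ℝ)) 2, ← Real.rpow_natCast (_ ^ (1/2:ℝ)) 2,
          ← Real.rpow_mul ha, ← Real.rpow_mul hb]
        norm_num

/-- Key moment inequalities for a probability measure. -/
lemma my_moments (hprob : IsProbabilityMeasure μ) (X : Ω → ℝ) (hX : ∀ ω, 0 ≤ X ω)
    (hXm : AEStronglyMeasurable X μ)
    (hX1 : Integrable X μ) (hX2 : Integrable (fun ω => X ω ^ 2) μ)
    (hX3 : Integrable (fun ω => X ω ^ 3) μ) :
    (∫ ω, X ω ∂μ) * (∫ ω, X ω ^ 2 ∂μ) ≤ ∫ ω, X ω ^ 3 ∂μ ∧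
    (∫ ω, X ω ∂μ) ^ 3 ≤ ∫ ω, X ω ^ 3 ∂μ := by
  set a := ∫ ω, X ω ∂μ
  set b := ∫ ω, X ω ^ 2 ∂μ
  set c := ∫ ω, X ω ^ 3 ∂μ
  have ha : 0 ≤ a := integral_nonneg hX
  have hb : 0 ≤ b := integral_nonneg fun ω => sq_nonneg _
  have hc : 0 ≤ c := integral_nonneg fun ω => pow_nonneg (hX ω) 3
  -- CS1 : b^2 ≤ a * c  using u = sqrt X, v = X * sqrt X
  have hsm : AEStronglyMeasurable (fun ω => Real.sqrt (X ω)) μ :=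
    (Real.continuous_sqrt.comp_aestronglyMeasurable hXm)
  have cs1 : b ^ 2 ≤ a * c := by
    have key := my_cs (fun ω => Real.sqrt (X ω)) (fun ω => X ω * Real.sqrt (X ω))
      (fun ω => Real.sqrt_nonneg _) (fun ω => mul_nonneg (hX ω) (Real.sqrt_nonneg _))
      hsm (hXm.mul hsm)
      (by simpa [Real.sq_sqrt (hX _)] using hX1)
      (by
        have : ∀ ω, (X ω * Real.sqrt (X ω)) ^ 2 = X ω ^ 3 := fun ω => by
          rw [mul_pow, Real.sq_sqrt (hX ω)]; ring
        simpa [this] using hX3)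
    have heq : ∀ ω, Real.sqrt (X ω) * (X ω * Real.sqrt (X ω)) = X ω ^ 2 := fun ω => by
      rw [← mul_assoc, mul_comm (Real.sqrt (X ω)) (X ω), mul_assoc,
        Real.mul_self_sqrt (hX ω)]; ring
    have h2 : ∀ ω, (Real.sqrt (X ω)) ^ 2 = X ω := fun ω => Real.sq_sqrt (hX ω)
    have h3 : ∀ ω, (X ω * Real.sqrt (X ω)) ^ 2 = X ω ^ 3 := fun ω => by
      rw [mul_pow, Real.sq_sqrt (hX ω)]; ring
    simp only [heq, h2, h3] at key
    exact key
  -- CS2 : a^2 ≤ b  using u = 1, v = X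
  have cs2 : a ^ 2 ≤ b := by
    have key := my_cs (fun _ => 1) X (fun _ => zero_le_one) hX
      aestronglyMeasurable_const hXm (by simpa using (integrable_const (1:ℝ))) hX2
    simpa [measure_univ] using key
  have second : a ^ 3 ≤ c := by
    rcases ha.eq_or_lt with h0 | h0
    · have : a ^ 3 = 0 := by rw [← h0]; ring
      linarith
    · have h4 : a ^ 4 ≤ a * c := le_trans (by nlinarith [cs2]) cs1
      have h5 : a * a ^ 3 ≤ a * c := by nlinarith [h4]
      exact le_of_mul_le_mul_left h5 h0
  refine ⟨?_, second⟩
  have hsq : (a * b) ^ 2 ≤ c ^ 2 := by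
    calc (a * b) ^ 2 = a ^ 2 * b ^ 2 := by ring
      _ ≤ a ^ 2 * (a * c) := mul_le_mul_of_nonneg_left cs1 (sq_nonneg a)
      _ = a ^ 3 * c := by ring
      _ ≤ c * c := mul_le_mul_of_nonneg_right second hc
      _ = c ^ 2 := by ring
  nlinarith [hsq, mul_nonneg ha hb, hc]
open MeasureTheory

lemma taylor_bd (f : ℝ → ℂ) (hf : ContDiff ℝ (⊤ : ℕ∞) f) (S : ℝ)
    (hS : ∀ x, ‖deriv (deriv f) x‖ ≤ S) :
    (∀ x m : ℝ, ‖deriv f x - deriv f m‖ ≤ S * |x - m|) ∧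
    (∀ x m : ℝ, ‖f x - f m - ((x:ℂ) - (m:ℂ)) * deriv f m‖ ≤ S * (x - m)^2) := by
  have hf' : ContDiff ℝ (↑(⊤:ℕ∞)) f := hf.of_le (by simp)
  have hdf : Differentiable ℝ f ∧ ContDiff ℝ (↑(⊤:ℕ∞)) (deriv f) :=
    contDiff_infty_iff_deriv.1 hf'
  have hddf : Differentiable ℝ (deriv f) ∧ ContDiff ℝ (↑(⊤:ℕ∞)) (deriv (deriv f)) :=
    contDiff_infty_iff_deriv.1 hdf.2
  have part1 : ∀ x m : ℝ, ‖deriv f x - deriv f m‖ ≤ S * |x - m| := by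
    intro x m
    have := Convex.norm_image_sub_le_of_norm_deriv_le (f := deriv f) (s := Set.univ)
      (fun y _ => hddf.1 y) (fun y _ => hS y) convex_univ (Set.mem_univ m) (Set.mem_univ x)
    simpa [Real.norm_eq_abs] using this
  refine ⟨part1, fun x m => ?_⟩
  set g : ℝ → ℂ := fun y => f y - f m - ((y:ℂ) - (m:ℂ)) * deriv f m with hgdef
  have hg' : ∀ y, HasDerivAt g (deriv f y - deriv f m) y := by
    intro y
    have h1 : HasDerivAt f (deriv f y) y := (hdf.1 y).hasDerivAt
    have h2 : HasDerivAt (fun t : ℝ => ((t:ℂ) - (m:ℂ)) * deriv f m) (deriv f m) y := by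
      have : HasDerivAt (fun t : ℝ => (t : ℂ)) 1 y := Complex.ofRealCLM.hasDerivAt
      simpa using (this.sub_const (m:ℂ)).mul_const (deriv f m)
    exact (h1.sub_const (f m)).sub h2
  have key := Convex.norm_image_sub_le_of_norm_hasDerivWithin_le
    (f := g) (f' := fun y => deriv f y - deriv f m) (C := S * |x - m|)
    (s := Set.uIcc m x)
    (fun y _ => (hg' y).hasDerivWithinAt)
    (fun y hy => by
      refine (part1 y m).trans ?_
      have hym : |y - m| ≤ |x - m| := by
        rcases Set.mem_uIcc.1 hy with ⟨h1, h2⟩ | ⟨h1, h2⟩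
        · rw [_root_.abs_of_nonneg (by linarith), _root_.abs_of_nonneg (by linarith)]; linarith
        · rw [_root_.abs_of_nonpos (by linarith), _root_.abs_of_nonpos (by linarith)]; linarith
      have hS0 : 0 ≤ S := le_trans (norm_nonneg _) (hS 0)
      exact mul_le_mul_of_nonneg_left hym hS0)
    (convex_uIcc m x) Set.left_mem_uIcc Set.right_mem_uIcc
  have hgm : g m = 0 := by simp [hgdef]
  rw [hgm, sub_zero, Real.norm_eq_abs] at key
  calc ‖g x‖ ≤ S * |x - m| * |x - m| := key
    _ = S * (x - m)^2 := by rw [mul_assoc, ← abs_mul, ← sq, _root_.abs_of_nonneg (sq_nonneg _)]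

/-- Cumulant expansion (Stein-type formula) truncated at order `l = 1`:
`E[h f(h)] = c⁽¹⁾(h) E[f(h)] + c⁽²⁾(h) E[f'(h)] + R₂` with
`|R₂| ≤ C E[|h|³] sup |f''|` for an absolute constant `C`. -/
theorem cumulant_expansion_order_one :
    ∃ C : ℝ, 0 < C ∧
      ∀ (Ω : Type) (_ : MeasurableSpace Ω) (μ : Measure Ω),
        IsProbabilityMeasure μ →
        ∀ (h : Ω → ℝ) (f : ℝ → ℂ), Measurable h →
          (∀ k : ℕ, Integrable (fun ω => |h ω| ^ k) μ) →
          ContDiff ℝ (⊤ : ℕ∞) f →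
          (∀ n : ℕ, ∃ M : ℝ, ∀ x : ℝ, ‖iteratedDeriv n f x‖ ≤ M) →
          ∃ R₂ : ℂ,
            (∫ ω, (h ω : ℂ) * f (h ω) ∂μ)
              = cumulant μ h 1 * (∫ ω, f (h ω) ∂μ)
                + cumulant μ h 2 * (∫ ω, deriv f (h ω) ∂μ) + R₂ ∧
            ‖R₂‖ ≤ C * (∫ ω, |h ω| ^ 3 ∂μ) * ⨆ x : ℝ, ‖iteratedDeriv 2 f x‖ := by
  refine ⟨16, by norm_num, ?_⟩
  intro Ω _ μ hprob h f hm hmom hf hbound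
  -- basic integrability of moments
  have habs1 : Integrable (fun ω => |h ω|) μ := by simpa using hmom 1
  have habs2 : Integrable (fun ω => |h ω| ^ 2) μ := hmom 2
  have habs3 : Integrable (fun ω => |h ω| ^ 3) μ := hmom 3
  have ih1 : Integrable h μ :=
    habs1.mono' hm.aestronglyMeasurable (Filter.Eventually.of_forall fun ω => by
      simp [Real.norm_eq_abs])
  have ih2 : Integrable (fun ω => h ω ^ 2) μ :=
    habs2.mono' ((hm.pow_const 2).aestronglyMeasurable) (Filter.Eventually.of_forall fun ω => by
      simp [Real.norm_eq_abs, abs_pow])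
  set m : ℝ := ∫ ω, h ω ∂μ with hmdef
  set v : ℝ := ∫ ω, h ω ^ 2 ∂μ with hvdef
  set σ2 : ℝ := v - m ^ 2 with hσ2def
  obtain ⟨hc1, hc2⟩ := cumulant_vals hprob h hm habs1 habs2
  -- sup of second derivative
  set S : ℝ := ⨆ x : ℝ, ‖iteratedDeriv 2 f x‖ with hSdef
  obtain ⟨M2, hM2⟩ := hbound 2
  have bddS : BddAbove (Set.range fun x => ‖iteratedDeriv 2 f x‖) :=
    ⟨M2, by rintro _ ⟨x, rfl⟩; exact hM2 x⟩
  have hSx' : ∀ x, ‖iteratedDeriv 2 f x‖ ≤ S := fun x => le_ciSup bddS x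
  have hit2 : iteratedDeriv 2 f = deriv (deriv f) := by
    rw [show (2:ℕ) = 1 + 1 from rfl, iteratedDeriv_succ, iteratedDeriv_one]
  have hSx : ∀ x, ‖deriv (deriv f) x‖ ≤ S := fun x => by rw [← hit2]; exact hSx' x
  have hS0 : 0 ≤ S := le_trans (norm_nonneg _) (hSx' 0)
  obtain ⟨tay1, tay2⟩ := taylor_bd f hf S hSx
  -- bounds on f and deriv f
  obtain ⟨M0, hM0⟩ := hbound 0
  have hM0' : ∀ x, ‖f x‖ ≤ M0 := by simpa [iteratedDeriv_zero] using hM0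
  obtain ⟨M1, hM1⟩ := hbound 1
  have hM1' : ∀ x, ‖deriv f x‖ ≤ M1 := by simpa [iteratedDeriv_one] using hM1
  have hfc : Continuous f := hf.continuous
  have hdfc : Continuous (deriv f) :=
    (contDiff_infty_iff_deriv.1 (hf.of_le (by simp))).2.continuous
  -- integrability of the complex integrands
  have int_f : Integrable (fun ω => f (h ω)) μ :=
    (integrable_const M0).mono' (hfc.measurable.comp hm).aestronglyMeasurable
      (Filter.Eventually.of_forall fun ω => hM0' (h ω))
  have int_df : Integrable (fun ω => deriv f (h ω)) μ :=
    (integrable_const M1).mono' (hdfc.measurable.comp hm).aestronglyMeasurable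
      (Filter.Eventually.of_forall fun ω => hM1' (h ω))
  have int_hf : Integrable (fun ω => (h ω : ℂ) * f (h ω)) μ := by
    refine (habs1.const_mul M0).mono'
      (((Complex.measurable_ofReal.comp hm).mul (hfc.measurable.comp hm)).aestronglyMeasurable)
      (Filter.Eventually.of_forall fun ω => ?_)
    rw [norm_mul, Complex.norm_real, Real.norm_eq_abs, mul_comm]
    exact mul_le_mul_of_nonneg_right (hM0' (h ω)) (abs_nonneg _)
  -- X = |h - m|
  set X : Ω → ℝ := fun ω => |h ω - m| with hXdef
  have iXm : AEStronglyMeasurable X μ := ((hm.sub measurable_const).abs).aestronglyMeasurable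
  have iX1 : Integrable X μ := (ih1.sub (integrable_const m)).abs
  have ihm2 : Integrable (fun ω => (h ω - m) ^ 2) μ := by
    have hpt : (fun ω => (h ω - m) ^ 2) = fun ω => h ω ^ 2 - 2 * m * h ω + m ^ 2 :=
      funext fun ω => by ring
    rw [hpt]
    exact (ih2.sub (ih1.const_mul (2 * m))).add (integrable_const _)
  have iX2 : Integrable (fun ω => X ω ^ 2) μ := by simpa [hXdef, sq_abs] using ihm2
  have hcube : ∀ ω, X ω ^ 3 ≤ 4 * |h ω| ^ 3 + 4 * |m| ^ 3 := by
    intro ω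
    have h1 : X ω ≤ |h ω| + |m| := by
      simp only [hXdef, sub_eq_add_neg]
      exact (abs_add_le (h ω) (-m)).trans (le_of_eq (by rw [abs_neg]))
    have ha : 0 ≤ |h ω| := abs_nonneg _
    have hb : 0 ≤ |m| := abs_nonneg _
    have hX0 : 0 ≤ X ω := abs_nonneg _
    calc X ω ^ 3 ≤ (|h ω| + |m|) ^ 3 := pow_le_pow_left₀ hX0 h1 3
      _ ≤ 4 * |h ω| ^ 3 + 4 * |m| ^ 3 := by
          nlinarith [mul_nonneg (add_nonneg ha hb) (sq_nonneg (|h ω| - |m|))]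
  have gbound : Integrable (fun ω => 4 * |h ω| ^ 3 + 4 * |m| ^ 3) μ :=
    (habs3.const_mul 4).add (integrable_const (4 * |m| ^ 3))
  have iX3 : Integrable (fun ω => X ω ^ 3) μ := by
    refine gbound.mono'
      ((((hm.sub measurable_const).abs).pow_const 3).aestronglyMeasurable)
      (Filter.Eventually.of_forall fun ω => ?_)
    rw [Real.norm_eq_abs, _root_.abs_of_nonneg (pow_nonneg (abs_nonneg _) 3)]
    exact hcube ω
  -- σ2
  have hσ2int : ∫ ω, (h ω - m) ^ 2 ∂μ = σ2 := by
    have hpt : ∀ ω, (h ω - m) ^ 2 = h ω ^ 2 - 2 * m * h ω + m ^ 2 := fun ω => by ring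
    have j1 : Integrable (fun ω => h ω ^ 2 - 2 * m * h ω) μ := ih2.sub (ih1.const_mul (2 * m))
    rw [integral_congr_ae (Filter.Eventually.of_forall hpt),
      integral_add j1 (integrable_const _),
      integral_sub ih2 (ih1.const_mul (2 * m)), integral_const_mul, integral_const]
    simp [hσ2def, hvdef, hmdef, measure_univ]
    ring
  have hσ2nn : 0 ≤ σ2 := hσ2int ▸ integral_nonneg fun ω => sq_nonneg _
  -- notation
  set A : ℂ := ∫ ω, (h ω : ℂ) * f (h ω) ∂μ with hAdef
  set B : ℂ := ∫ ω, f (h ω) ∂μ with hBdef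
  set D : ℂ := ∫ ω, deriv f (h ω) ∂μ with hDdef
  refine ⟨A - (m : ℂ) * B - (σ2 : ℂ) * D, ?_, ?_⟩
  · rw [hc1, hc2]
    push_cast [hσ2def]
    ring
  · -- the bound
    have int_hmC : Integrable (fun ω => ((h ω - m : ℝ) : ℂ)) μ :=
      (ih1.sub (integrable_const m)).ofReal
    have int_hm2C : Integrable (fun ω => (((h ω - m) ^ 2 : ℝ) : ℂ)) μ := ihm2.ofReal
    have eq0 : ∫ ω, ((h ω - m : ℝ) : ℂ) ∂μ = 0 := by
      have e : ∫ ω, ((h ω - m : ℝ) : ℂ) ∂μ = ((∫ ω, (h ω - m) ∂μ : ℝ) : ℂ) :=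
        integral_ofReal (𝕜 := ℂ)
      rw [e, integral_sub ih1 (integrable_const m), integral_const]
      simp [measure_univ, hmdef]
    have eqσ : ∫ ω, (((h ω - m) ^ 2 : ℝ) : ℂ) ∂μ = (σ2 : ℂ) := by
      have e : ∫ ω, (((h ω - m) ^ 2 : ℝ) : ℂ) ∂μ = ((∫ ω, (h ω - m) ^ 2 ∂μ : ℝ) : ℂ) :=
        integral_ofReal (𝕜 := ℂ)
      rw [e, hσ2int]
    -- claim 1
    have claim1 : ∫ ω, ((h ω : ℂ) - (m : ℂ)) *
        (f (h ω) - f m - ((h ω : ℂ) - (m : ℂ)) * deriv f m) ∂μ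
        = A - (m : ℂ) * B - deriv f m * (σ2 : ℂ) := by
      have hpt : ∀ ω, ((h ω : ℂ) - (m : ℂ)) *
          (f (h ω) - f m - ((h ω : ℂ) - (m : ℂ)) * deriv f m)
          = (h ω : ℂ) * f (h ω) - (m : ℂ) * f (h ω)
            - f m * ((h ω - m : ℝ) : ℂ) - deriv f m * (((h ω - m) ^ 2 : ℝ) : ℂ) := by
        intro ω
        push_cast
        ring
      have j1 : Integrable (fun ω => (h ω : ℂ) * f (h ω) - (m : ℂ) * f (h ω)) μ :=
        int_hf.sub (int_f.const_mul (m : ℂ))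
      have j2 : Integrable (fun ω => (h ω : ℂ) * f (h ω) - (m : ℂ) * f (h ω)
          - f m * ((h ω - m : ℝ) : ℂ)) μ := j1.sub (int_hmC.const_mul (f m))
      rw [integral_congr_ae (Filter.Eventually.of_forall hpt),
        integral_sub j2 (int_hm2C.const_mul (deriv f m)),
        integral_sub j1 (int_hmC.const_mul (f m)),
        integral_sub int_hf (int_f.const_mul (m : ℂ)),
        integral_const_mul, integral_const_mul, integral_const_mul, eq0, eqσ]
      rw [← hAdef, ← hBdef]
      ring
    -- claim 2
    have claim2 : ∫ ω, (deriv f (h ω) - deriv f m) ∂μ = D - deriv f m := by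
      rw [integral_sub int_df (integrable_const _), integral_const, ← hDdef]
      simp [measure_univ]
    have hR : A - (m : ℂ) * B - (σ2 : ℂ) * D
        = (∫ ω, ((h ω : ℂ) - (m : ℂ)) *
            (f (h ω) - f m - ((h ω : ℂ) - (m : ℂ)) * deriv f m) ∂μ)
          - (σ2 : ℂ) * ∫ ω, (deriv f (h ω) - deriv f m) ∂μ := by
      rw [claim1, claim2]
      ring
    rw [hR]
    -- bound each term
    have bound1 : ‖∫ ω, ((h ω : ℂ) - (m : ℂ)) *
        (f (h ω) - f m - ((h ω : ℂ) - (m : ℂ)) * deriv f m) ∂μ‖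
        ≤ S * ∫ ω, X ω ^ 3 ∂μ := by
      rw [← integral_const_mul]
      refine norm_integral_le_of_norm_le (iX3.const_mul S)
        (Filter.Eventually.of_forall fun ω => ?_)
      rw [norm_mul]
      have e1 : ‖(h ω : ℂ) - (m : ℂ)‖ = X ω := by
        rw [hXdef, ← Complex.ofReal_sub, Complex.norm_real, Real.norm_eq_abs]
      have e2 : ‖f (h ω) - f m - ((h ω : ℂ) - (m : ℂ)) * deriv f m‖ ≤ S * X ω ^ 2 :=
        (tay2 (h ω) m).trans_eq (by simp [hXdef, _root_.sq_abs])
      calc ‖(h ω : ℂ) - (m : ℂ)‖ * ‖f (h ω) - f m - ((h ω : ℂ) - (m : ℂ)) * deriv f m‖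
          ≤ X ω * (S * X ω ^ 2) := by
            rw [e1]; exact mul_le_mul_of_nonneg_left e2 (abs_nonneg _)
        _ = S * X ω ^ 3 := by ring
    have bound2 : ‖∫ ω, (deriv f (h ω) - deriv f m) ∂μ‖ ≤ S * ∫ ω, X ω ∂μ := by
      rw [← integral_const_mul]
      refine norm_integral_le_of_norm_le (iX1.const_mul S)
        (Filter.Eventually.of_forall fun ω => ?_)
      exact tay1 (h ω) m
    -- moment inequalities
    have hmom3 := my_moments hprob X (fun ω => abs_nonneg _) iXm iX1 iX2 iX3
    have hXsq : ∫ ω, X ω ^ 2 ∂μ = σ2 := by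
      rw [← hσ2int]
      exact integral_congr_ae (Filter.Eventually.of_forall fun ω => by simp [hXdef, _root_.sq_abs])
    have key1 : (∫ ω, X ω ∂μ) * σ2 ≤ ∫ ω, X ω ^ 3 ∂μ := by
      rw [← hXsq]; exact hmom3.1
    -- ∫ X^3 ≤ 8 ∫ |h|^3
    have habsm : |m| ≤ ∫ ω, |h ω| ∂μ := by
      calc |m| = ‖∫ ω, h ω ∂μ‖ := by rw [Real.norm_eq_abs]
        _ ≤ ∫ ω, ‖h ω‖ ∂μ := norm_integral_le_integral_norm h
        _ = ∫ ω, |h ω| ∂μ := by simp [Real.norm_eq_abs]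
    have hmomabs := my_moments hprob (fun ω => |h ω|) (fun ω => abs_nonneg _)
      hm.abs.aestronglyMeasurable habs1 habs2 habs3
    have hm3 : |m| ^ 3 ≤ ∫ ω, |h ω| ^ 3 ∂μ := by
      calc |m| ^ 3 ≤ (∫ ω, |h ω| ∂μ) ^ 3 := pow_le_pow_left₀ (abs_nonneg _) habsm 3
        _ ≤ ∫ ω, |h ω| ^ 3 ∂μ := hmomabs.2
    have hX3le : ∫ ω, X ω ^ 3 ∂μ ≤ 8 * ∫ ω, |h ω| ^ 3 ∂μ := by
      calc ∫ ω, X ω ^ 3 ∂μ ≤ ∫ ω, (4 * |h ω| ^ 3 + 4 * |m| ^ 3) ∂μ :=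
            integral_mono iX3 gbound hcube
        _ = 4 * (∫ ω, |h ω| ^ 3 ∂μ) + 4 * |m| ^ 3 := by
            rw [integral_add (habs3.const_mul 4) (integrable_const _), integral_const_mul,
              integral_const]
            simp [measure_univ]
        _ ≤ 8 * ∫ ω, |h ω| ^ 3 ∂μ := by linarith [hm3]
    -- put it together
    have hX1nn : 0 ≤ ∫ ω, X ω ∂μ := integral_nonneg fun ω => abs_nonneg _
    have hX3nn : 0 ≤ ∫ ω, X ω ^ 3 ∂μ := integral_nonneg fun ω => pow_nonneg (abs_nonneg _) 3
    calc ‖(∫ ω, ((h ω : ℂ) - (m : ℂ)) *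
            (f (h ω) - f m - ((h ω : ℂ) - (m : ℂ)) * deriv f m) ∂μ)
          - (σ2 : ℂ) * ∫ ω, (deriv f (h ω) - deriv f m) ∂μ‖
        ≤ ‖∫ ω, ((h ω : ℂ) - (m : ℂ)) *
            (f (h ω) - f m - ((h ω : ℂ) - (m : ℂ)) * deriv f m) ∂μ‖
          + ‖(σ2 : ℂ) * ∫ ω, (deriv f (h ω) - deriv f m) ∂μ‖ := norm_sub_le _ _
      _ ≤ S * (∫ ω, X ω ^ 3 ∂μ) + σ2 * (S * ∫ ω, X ω ∂μ) := by
          refine add_le_add bound1 ?_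
          rw [norm_mul, Complex.norm_real, Real.norm_eq_abs, _root_.abs_of_nonneg hσ2nn]
          exact mul_le_mul_of_nonneg_left bound2 hσ2nn
      _ ≤ S * (∫ ω, X ω ^ 3 ∂μ) + S * (∫ ω, X ω ^ 3 ∂μ) := by
          have : σ2 * (S * ∫ ω, X ω ∂μ) = S * ((∫ ω, X ω ∂μ) * σ2) := by ring
          rw [this]
          exact add_le_add le_rfl (mul_le_mul_of_nonneg_left key1 hS0)
      _ = 2 * S * (∫ ω, X ω ^ 3 ∂μ) := by ring
      _ ≤ 2 * S * (8 * ∫ ω, |h ω| ^ 3 ∂μ) :=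
          mul_le_mul_of_nonneg_left hX3le (by positivity)
      _ = 16 * (∫ ω, |h ω| ^ 3 ∂μ) * S := by ring
end
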